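/- arXiv:2404.04767 — 4 statements merged into one kernel-verified Lean document; each statement's English description precedes it below -/
import Mathlib

section
/- Let (I, ≤) be a finite partially ordered set, and let F assign to each pair of elements μ ≤ τ of I a Laurent polynomial F_{μ,τ} ∈ ℚ[q,q⁻¹] with F_{τ,τ} = 1 for every τ. Then there exists a unique pair of assignments H, D, each assigning to every pair μ ≤ τ a Laurent polynomial in ℚ[q,q⁻¹], such that: (i) H_{τ,τ} = D_{τ,τ} = 1 for all τ; (ii) for all μ < τ, H_{μ,τ} is supported in strictly negative degrees and D_{μ,τ} is palindromic; (iii) for all μ ≤ τ, F_{μ,τ} = Σ_{ν : μ ≤ ν ≤ τ} H_{ν,τ} · D_{μ,ν}. -/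
/-- The coefficient of a Laurent polynomial in degree `k`. -/
def lcoeff (P : LaurentPolynomial ℚ) (k : ℤ) : ℚ := (show ℤ →₀ ℚ from AddMonoidAlgebra.coeff P) k

/-- A Laurent polynomial is supported in strictly negative degrees if its coefficient in
degree `k` vanishes for all integers `k ≥ 0`. -/
def NegSupported (P : LaurentPolynomial ℚ) : Prop := ∀ k : ℤ, 0 ≤ k → lcoeff P k = 0

/-- A Laurent polynomial is palindromic if it is fixed by the involution `q ↦ q⁻¹`,
i.e. its coefficients in degree `k` and `-k` agree for all `k`. -/
def Palindromic (P : LaurentPolynomial ℚ) : Prop := ∀ k : ℤ, lcoeff P k = lcoeff P (-k)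

open scoped Classical in
/-- `IsHDSolution F H D` records that the assignments `H` and `D` solve, relative to `F`, the
recursion coming from the stalkwise decomposition theorem identity:
(i) `H τ τ = D τ τ = 1`; (ii) for `μ < τ`, `H μ τ` is supported in strictly negative degrees
and `D μ τ` is palindromic; (iii) for `μ ≤ τ`,
`F μ τ = ∑_{ν : μ ≤ ν ≤ τ} H ν τ * D μ ν`. -/
def IsHDSolution {I : Type*} [Fintype I] [PartialOrder I]
    (F H D : I → I → LaurentPolynomial ℚ) : Prop :=
  (∀ τ : I, H τ τ = 1 ∧ D τ τ = 1) ∧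
  (∀ μ τ : I, μ < τ → NegSupported (H μ τ) ∧ Palindromic (D μ τ)) ∧
  (∀ μ τ : I, μ ≤ τ →
    F μ τ = ∑ ν ∈ Finset.univ.filter fun ν : I => μ ≤ ν ∧ ν ≤ τ, H ν τ * D μ ν)

namespace HDaux

open scoped Classical

lemma lcoeff_sub (P Q : LaurentPolynomial ℚ) (k : ℤ) :
    lcoeff (P - Q) k = lcoeff P k - lcoeff Q k := rfl

lemma lcoeff_ext {P Q : LaurentPolynomial ℚ} (h : ∀ k, lcoeff P k = lcoeff Q k) : P = Q :=
  AddMonoidAlgebra.coeff_injective (Finsupp.ext h)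

/-- The palindromic part of a Laurent polynomial: coefficient of degree `k` is the
coefficient of `P` in degree `|k|`. -/
noncomputable def palPart (P : LaurentPolynomial ℚ) : LaurentPolynomial ℚ :=
  AddMonoidAlgebra.ofCoeff <| Finsupp.onFinset
    ((AddMonoidAlgebra.coeff P).support ∪ (AddMonoidAlgebra.coeff P).support.image (fun x => -x))
    (fun k => lcoeff P |k|)
    (by
      intro a ha
      rcases abs_choice a with h | h
      · exact Finset.mem_union_left _ (by rw [← h]; exact Finsupp.mem_support_iff.2 ha)
      · refine Finset.mem_union_right _ ?_
        simp only [Finset.mem_image]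
        exact ⟨|a|, Finsupp.mem_support_iff.2 ha, by omega⟩)

lemma lcoeff_palPart (P : LaurentPolynomial ℚ) (k : ℤ) :
    lcoeff (palPart P) k = lcoeff P |k| := rfl

/-- The negatively-supported part of a Laurent polynomial. -/
noncomputable def negPart (P : LaurentPolynomial ℚ) : LaurentPolynomial ℚ := P - palPart P

lemma palPart_palindromic (P : LaurentPolynomial ℚ) : Palindromic (palPart P) := by
  intro k
  rw [lcoeff_palPart, lcoeff_palPart, abs_neg]

lemma negPart_negSupported (P : LaurentPolynomial ℚ) : NegSupported (negPart P) := by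
  intro k hk
  rw [negPart, lcoeff_sub, lcoeff_palPart, abs_of_nonneg hk, sub_self]

lemma negPart_add_palPart (P : LaurentPolynomial ℚ) : negPart P + palPart P = P := by
  rw [negPart, sub_add_cancel]

lemma eq_zero_of_neg_pal {P : LaurentPolynomial ℚ} (h1 : NegSupported P)
    (h2 : Palindromic P) : P = 0 := by
  apply lcoeff_ext
  intro k
  have hz : lcoeff (0 : LaurentPolynomial ℚ) k = 0 := rfl
  rw [hz]
  rcases le_or_gt 0 k with h | h
  · exact h1 k h
  · rw [h2 k]; exact h1 (-k) (by omega)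

/-- Uniqueness of the decomposition into negatively supported and palindromic parts. -/
lemma decomp_unique {R H D : LaurentPolynomial ℚ} (hH : NegSupported H) (hD : Palindromic D)
    (h : H + D = R) : H = negPart R ∧ D = palPart R := by
  have key : H - negPart R = palPart R - D := by
    have h2 : H + D = negPart R + palPart R := by rw [h, negPart_add_palPart]
    linear_combination h2
  have hneg : NegSupported (H - negPart R) := by
    intro k hk
    rw [lcoeff_sub, hH k hk, negPart_negSupported R k hk, sub_self]
  have hpal : Palindromic (palPart R - D) := by
    intro k
    rw [lcoeff_sub, lcoeff_sub, palPart_palindromic R k, hD k]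
  rw [key] at hneg
  have hz := eq_zero_of_neg_pal hneg hpal
  constructor
  · exact sub_eq_zero.mp (by rw [key]; exact hz)
  · exact (sub_eq_zero.mp hz).symm

variable {I : Type*} [Fintype I] [PartialOrder I]

lemma card_lt_left {μ ν τ : I} (h1 : μ < ν) (h2 : ν ≤ τ) :
    (Finset.univ.filter fun x : I => ν ≤ x ∧ x ≤ τ).card <
    (Finset.univ.filter fun x : I => μ ≤ x ∧ x ≤ τ).card := by
  apply Finset.card_lt_card
  constructor
  · intro x hx
    simp only [Finset.mem_filter, Finset.mem_univ, true_and] at *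
    exact ⟨h1.le.trans hx.1, hx.2⟩
  · intro hsub
    have := hsub (by simp [le_refl, h1.le.trans h2] : μ ∈ _)
    simp only [Finset.mem_filter, Finset.mem_univ, true_and] at this
    exact absurd this.1 h1.not_ge

lemma card_lt_right {μ ν τ : I} (h1 : μ ≤ ν) (h2 : ν < τ) :
    (Finset.univ.filter fun x : I => μ ≤ x ∧ x ≤ ν).card <
    (Finset.univ.filter fun x : I => μ ≤ x ∧ x ≤ τ).card := by
  apply Finset.card_lt_card
  constructor
  · intro x hx
    simp only [Finset.mem_filter, Finset.mem_univ, true_and] at *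
    exact ⟨hx.1, hx.2.trans h2.le⟩
  · intro hsub
    have := hsub (by simp [le_refl, h1.trans h2.le] : τ ∈ _)
    simp only [Finset.mem_filter, Finset.mem_univ, true_and] at this
    exact absurd this.2 h2.not_ge

lemma interval_split {μ τ : I} (h : μ < τ) :
    (Finset.univ.filter fun ν : I => μ ≤ ν ∧ ν ≤ τ) =
    insert μ (insert τ (Finset.univ.filter fun ν : I => μ < ν ∧ ν < τ)) := by
  ext ν
  simp only [Finset.mem_insert, Finset.mem_filter, Finset.mem_univ, true_and]
  constructor
  · rintro ⟨h1, h2⟩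
    rcases h1.lt_or_eq with h1' | h1'
    · rcases h2.lt_or_eq with h2' | h2'
      · exact Or.inr (Or.inr ⟨h1', h2'⟩)
      · exact Or.inr (Or.inl h2')
    · exact Or.inl h1'.symm
  · rintro (rfl | rfl | ⟨h1, h2⟩)
    · exact ⟨le_refl _, h.le⟩
    · exact ⟨h.le, le_refl _⟩
    · exact ⟨h1.le, h2.le⟩

lemma mu_not_mem {μ τ : I} (h : μ < τ) :
    μ ∉ insert τ (Finset.univ.filter fun ν : I => μ < ν ∧ ν < τ) := by
  simp only [Finset.mem_insert, Finset.mem_filter, Finset.mem_univ, true_and]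
  rintro (rfl | ⟨h1, _⟩)
  · exact lt_irrefl _ h
  · exact lt_irrefl _ h1

lemma tau_not_mem {μ τ : I} :
    τ ∉ (Finset.univ.filter fun ν : I => μ < ν ∧ ν < τ) := by
  simp only [Finset.mem_filter, Finset.mem_univ, true_and]
  rintro ⟨_, h2⟩
  exact lt_irrefl _ h2

/-- The pair `(H μ τ, D μ τ)` constructed by recursion on the size of the interval. -/
noncomputable def HD (F : I → I → LaurentPolynomial ℚ) (μ τ : I) :
    LaurentPolynomial ℚ × LaurentPolynomial ℚ :=
  if h : μ < τ then
    let R := F μ τ - ∑ ν ∈ (Finset.univ.filter fun ν : I => μ < ν ∧ ν < τ).attach,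
      (HD F ν.1 τ).1 * (HD F μ ν.1).2
    (negPart R, palPart R)
  else (1, 1)
termination_by (Finset.univ.filter fun ν : I => μ ≤ ν ∧ ν ≤ τ).card
decreasing_by
  · have hν := ν.2
    simp only [Finset.mem_filter, Finset.mem_univ, true_and] at hν
    exact card_lt_left hν.1 hν.2.le
  · have hν := ν.2
    simp only [Finset.mem_filter, Finset.mem_univ, true_and] at hν
    exact card_lt_right hν.1.le hν.2

/-- The remainder term in the recursion. -/
noncomputable def Rrem (F : I → I → LaurentPolynomial ℚ) (μ τ : I) : LaurentPolynomial ℚ :=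
  F μ τ - ∑ ν ∈ (Finset.univ.filter fun ν : I => μ < ν ∧ ν < τ),
    (HD F ν τ).1 * (HD F μ ν).2

lemma HD_of_not_lt (F : I → I → LaurentPolynomial ℚ) {μ τ : I} (h : ¬ μ < τ) :
    HD F μ τ = (1, 1) := by
  rw [HD]; simp [h]

lemma HD_of_lt (F : I → I → LaurentPolynomial ℚ) {μ τ : I} (h : μ < τ) :
    HD F μ τ = (negPart (Rrem F μ τ), palPart (Rrem F μ τ)) := by
  rw [HD]
  simp only [h, dite_true, Rrem]
  rw [Finset.sum_attach (Finset.univ.filter fun ν : I => μ < ν ∧ ν < τ)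
    (fun ν => (HD F ν τ).1 * (HD F μ ν).2)]

lemma singleton_interval (τ : I) :
    (Finset.univ.filter fun ν : I => τ ≤ ν ∧ ν ≤ τ) = {τ} := by
  ext ν
  simp only [Finset.mem_filter, Finset.mem_univ, true_and, Finset.mem_singleton]
  constructor
  · rintro ⟨a, b⟩; exact le_antisymm b a
  · rintro rfl; exact ⟨le_refl _, le_refl _⟩

/-- Existence: the pair constructed by `HD` is a solution. -/
lemma HD_isSolution (F : I → I → LaurentPolynomial ℚ) (hF : ∀ τ : I, F τ τ = 1) :
    IsHDSolution F (fun μ τ => (HD F μ τ).1) (fun μ τ => (HD F μ τ).2) := by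
  refine ⟨fun τ => ?_, fun μ τ h => ?_, fun μ τ h => ?_⟩ <;> dsimp only
  · rw [HD_of_not_lt F (lt_irrefl τ)]
    exact ⟨rfl, rfl⟩
  · rw [HD_of_lt F h]
    exact ⟨negPart_negSupported _, palPart_palindromic _⟩
  · rcases h.lt_or_eq with hlt | rfl
    · rw [interval_split hlt, Finset.sum_insert (mu_not_mem hlt),
        Finset.sum_insert tau_not_mem]
      rw [HD_of_lt F hlt, HD_of_not_lt F (lt_irrefl μ), HD_of_not_lt F (lt_irrefl τ)]
      simp only [mul_one, one_mul]
      have h1 : negPart (Rrem F μ τ) + palPart (Rrem F μ τ) = Rrem F μ τ :=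
        negPart_add_palPart _
      rw [← add_assoc, h1, Rrem]
      ring
    · rw [singleton_interval, Finset.sum_singleton, HD_of_not_lt F (lt_irrefl μ)]
      simp [hF μ]

/-- Uniqueness, by strong induction on the size of the interval. -/
lemma uniq_aux (F H D H' D' : I → I → LaurentPolynomial ℚ)
    (s : IsHDSolution F H D) (s' : IsHDSolution F H' D') :
    ∀ n : ℕ, ∀ μ τ : I, μ ≤ τ →
      (Finset.univ.filter fun ν : I => μ ≤ ν ∧ ν ≤ τ).card ≤ n →
      H μ τ = H' μ τ ∧ D μ τ = D' μ τ := by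
  intro n
  induction n with
  | zero =>
    intro μ τ hle hcard
    exfalso
    have : μ ∈ (Finset.univ.filter fun ν : I => μ ≤ ν ∧ ν ≤ τ) := by
      simp [le_refl, hle]
    have := Finset.card_pos.2 ⟨μ, this⟩
    omega
  | succ n ih =>
    intro μ τ hle hcard
    rcases hle.lt_or_eq with hlt | rfl
    · have hmid : ∀ ν ∈ (Finset.univ.filter fun ν : I => μ < ν ∧ ν < τ),
          H ν τ * D μ ν = H' ν τ * D' μ ν := by
        intro ν hν
        simp only [Finset.mem_filter, Finset.mem_univ, true_and] at hν
        have e1 := ih ν τ hν.2.le (by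
          have := card_lt_left hν.1 hν.2.le
          omega)
        have e2 := ih μ ν hν.1.le (by
          have := card_lt_right hν.1.le hν.2
          omega)
        rw [e1.1, e2.2]
      have key : H μ τ + D μ τ = H' μ τ + D' μ τ := by
        have i1 := s.2.2 μ τ hlt.le
        have i2 := s'.2.2 μ τ hlt.le
        rw [interval_split hlt, Finset.sum_insert (mu_not_mem hlt),
          Finset.sum_insert tau_not_mem] at i1 i2
        rw [(s.1 τ).1, (s.1 μ).2] at i1
        rw [(s'.1 τ).1, (s'.1 μ).2] at i2
        rw [Finset.sum_congr rfl hmid] at i1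
        have := i1.symm.trans i2
        simp only [mul_one, one_mul] at this
        linear_combination this
      have h1 := s.2.1 μ τ hlt
      have h2 := s'.2.1 μ τ hlt
      have d1 := decomp_unique h1.1 h1.2 key
      have d2 := decomp_unique h2.1 h2.2 (rfl : H' μ τ + D' μ τ = _)
      exact ⟨d1.1.trans d2.1.symm, d1.2.trans d2.2.symm⟩
    · exact ⟨(s.1 μ).1.trans (s'.1 μ).1.symm, (s.1 μ).2.trans (s'.1 μ).2.symm⟩

end HDaux

/-- Let `(I, ≤)` be a finite poset and let `F` assign to each pair `μ ≤ τ` a Laurent polynomial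
with `F τ τ = 1`.  Then there is a pair of assignments `(H, D)` satisfying the decomposition
recursion, and any two such pairs agree on all pairs `μ ≤ τ`: this is the unique pair of
assignments on comparable pairs. -/
theorem exists_unique_HD {I : Type*} [Fintype I] [PartialOrder I]
    (F : I → I → LaurentPolynomial ℚ) (hF : ∀ τ : I, F τ τ = 1) :
    (∃ H D : I → I → LaurentPolynomial ℚ, IsHDSolution F H D) ∧
    (∀ H D H' D' : I → I → LaurentPolynomial ℚ,
      IsHDSolution F H D → IsHDSolution F H' D' →
      ∀ μ τ : I, μ ≤ τ → H μ τ = H' μ τ ∧ D μ τ = D' μ τ) := by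
  constructor
  · exact ⟨_, _, HDaux.HD_isSolution F hF⟩
  · intro H D H' D' s s' μ τ hle
    classical
    exact HDaux.uniq_aux F H D H' D' s s'
      ((Finset.univ.filter fun ν : I => μ ≤ ν ∧ ν ≤ τ).card) μ τ hle le_rfl
end

section
/- For all integers 0 ≤ d ≤ n and all rationals a_0, a_1, …, a_d, the following identity holds in the ring ℚ[K,K⁻¹,L,L⁻¹] of Laurent polynomials in two variables: Σ_{i=0}^{d} Σ_{c=0}^{n−d} ( Σ_{j=0}^{i} (−1)^{i−j} C(d−j, i−j) a_j ) · C(n−d, c) · K^{−(i+c)} L^{2i+c−n} = L^{−n} (1 + K^{−1}L)^{n−d} Σ_{j=0}^{d} a_j (1 − K^{−1}L²)^{d−j} (K^{−1}L²)^{j}. -/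
/-- The monomial `K^a L^b` in the ring `ℚ[K,K⁻¹,L,L⁻¹]` of Laurent polynomials in two
variables, realized as the group algebra of `ℤ × ℤ` over `ℚ`. -/
noncomputable def KL (a b : ℤ) : AddMonoidAlgebra ℚ (ℤ × ℤ) := AddMonoidAlgebra.single (a, b) 1

section Aux

variable {R : Type*} [CommRing R] [Algebra ℚ R]

lemma KL_mul (a b c e : ℤ) : KL a b * KL c e = KL (a + c) (b + e) := by
  unfold KL
  rw [AddMonoidAlgebra.single_mul_single]
  norm_num [Prod.mk_add_mk]

lemma KL_pow (k : ℕ) (a b : ℤ) : KL a b ^ k = KL (k * a) (k * b) := by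
  induction k with
  | zero =>
    simp only [pow_zero, Nat.cast_zero, zero_mul]
    rfl
  | succ m ih =>
    rw [pow_succ, ih, KL_mul]
    push_cast
    ring_nf

lemma binom_expand (m : ℕ) (x : R) :
    (1 + x) ^ m = ∑ c ∈ Finset.range (m + 1), (m.choose c : ℚ) • x ^ c := by
  rw [add_comm, add_pow]
  refine Finset.sum_congr rfl fun c _ => ?_
  rw [one_pow, mul_one, Nat.cast_smul_eq_nsmul, nsmul_eq_mul, mul_comm]

lemma core (d : ℕ) (a : ℕ → ℚ) (y : R) :
    ∑ i ∈ Finset.range (d + 1),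
      (∑ j ∈ Finset.range (i + 1),
        (-1 : ℚ) ^ (i - j) * ((d - j).choose (i - j) : ℚ) * a j) • y ^ i
    = ∑ j ∈ Finset.range (d + 1), a j • ((1 - y) ^ (d - j) * y ^ j) := by
  -- push the scalar sum inside
  have h1 : ∀ i ∈ Finset.range (d + 1),
      (∑ j ∈ Finset.range (i + 1),
        (-1 : ℚ) ^ (i - j) * ((d - j).choose (i - j) : ℚ) * a j) • y ^ i
      = ∑ j ∈ Finset.range (i + 1),
          ((-1 : ℚ) ^ (i - j) * ((d - j).choose (i - j) : ℚ) * a j) • y ^ i := by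
    intro i _
    rw [Finset.sum_smul]
  rw [Finset.sum_congr rfl h1]
  -- swap the order of summation over the triangle
  have h2 : ∑ i ∈ Finset.range (d + 1), ∑ j ∈ Finset.range (i + 1),
      ((-1 : ℚ) ^ (i - j) * ((d - j).choose (i - j) : ℚ) * a j) • y ^ i
      = ∑ j ∈ Finset.range (d + 1), ∑ i ∈ Finset.Ico j (d + 1),
        ((-1 : ℚ) ^ (i - j) * ((d - j).choose (i - j) : ℚ) * a j) • y ^ i := by
    have := Finset.sum_Ico_Ico_comm 0 (d + 1)
      (fun j i => ((-1 : ℚ) ^ (i - j) * ((d - j).choose (i - j) : ℚ) * a j) • y ^ i)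
    simp only [← Finset.range_eq_Ico] at this
    exact this.symm
  rw [h2]
  refine Finset.sum_congr rfl fun j hj => ?_
  rw [Finset.mem_range] at hj
  have hjd : j ≤ d := Nat.lt_succ_iff.mp hj
  rw [Finset.sum_Ico_eq_sum_range]
  have hrange : d + 1 - j = d - j + 1 := by omega
  rw [hrange]
  -- expand the binomial (1 - y)^(d - j)
  have hsub : (1 : R) - y = 1 + (-y) := by ring
  rw [hsub, binom_expand, Finset.sum_mul, Finset.smul_sum]
  refine Finset.sum_congr rfl fun k hk => ?_
  have hjk : j + k - j = k := by omega
  rw [hjk]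
  simp only [Algebra.smul_def, map_mul, map_pow, map_neg, map_one, map_natCast]
  ring

end Aux

/-- For `0 ≤ d ≤ n` and rationals `a_0, …, a_d`, the identity
`∑_{i=0}^{d} ∑_{c=0}^{n−d} (∑_{j=0}^{i} (−1)^{i−j} C(d−j, i−j) a_j) C(n−d, c)
  K^{−(i+c)} L^{2i+c−n}
 = L^{−n} (1 + K^{−1}L)^{n−d} ∑_{j=0}^{d} a_j (1 − K^{−1}L²)^{d−j} (K^{−1}L²)^{j}`
holds in `ℚ[K,K⁻¹,L,L⁻¹]`. -/
theorem omega_generating_function_identity (n d : ℕ) (hdn : d ≤ n) (a : ℕ → ℚ) :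
    ∑ i ∈ Finset.range (d + 1), ∑ c ∈ Finset.range (n - d + 1),
      ((∑ j ∈ Finset.range (i + 1),
          (-1 : ℚ) ^ (i - j) * ((d - j).choose (i - j) : ℚ) * a j)
        * ((n - d).choose c : ℚ)) • KL (-((i : ℤ) + c)) (2 * i + c - n)
    = KL 0 (-(n : ℤ)) * (1 + KL (-1) 1) ^ (n - d) *
        ∑ j ∈ Finset.range (d + 1),
          a j • ((1 - KL (-1) 2) ^ (d - j) * KL (-1) 2 ^ j) := by
  rw [← core d a (KL (-1) 2), binom_expand (n - d) (KL (-1) 1)]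
  rw [mul_assoc, Finset.sum_mul_sum]
  simp_rw [Finset.mul_sum]
  rw [Finset.sum_comm]
  refine Finset.sum_congr rfl fun c _ => ?_
  refine Finset.sum_congr rfl fun i _ => ?_
  have hKL : KL (-((i : ℤ) + c)) (2 * i + c - n)
      = KL 0 (-(n : ℤ)) * (KL (-1) 1 ^ c * KL (-1) 2 ^ i) := by
    rw [KL_pow, KL_pow, KL_mul, KL_mul]
    congr 1 <;> push_cast <;> ring
  rw [hKL]
  simp only [Algebra.smul_def, map_mul, map_pow, map_neg, map_one, map_natCast]
  ring
end

section
/- Let d ≥ 1 be an integer and let a_1, …, a_d ∈ ℚ; set a_0 = a_{d+1} = 0. Suppose that in ℚ[q,q⁻¹] one has the symmetry Σ_{j=1}^{d} a_j (q²−1)^{d−j} = q^{2(d−1)} · Σ_{j=1}^{d} a_j (q⁻²−1)^{d−j}. Then in ℚ[t,t⁻¹] one has Σ_{j=0}^{d} (a_j + a_{j+1}) (1−t²)^{d−j} t^{2j} = Σ_{j=1}^{d} a_j (t²−1)^{d−j}. -/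
open LaurentPolynomial

private lemma hTT' : (T (-2) - 1 : LaurentPolynomial ℚ) = (1 - T 2) * T (-2) := by
  rw [sub_mul, one_mul, ← T_add]
  norm_num [T_zero]

/-- Let `d ≥ 1`, `a_1, …, a_d ∈ ℚ`, with `a_0 = a_{d+1} = 0`.  If
`∑_{j=1}^{d} a_j (q²−1)^{d−j} = q^{2(d−1)} ∑_{j=1}^{d} a_j (q⁻²−1)^{d−j}` holds in `ℚ[q,q⁻¹]`,
then `∑_{j=0}^{d} (a_j + a_{j+1}) (1−t²)^{d−j} t^{2j} = ∑_{j=1}^{d} a_j (t²−1)^{d−j}`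
holds in `ℚ[t,t⁻¹]`. -/
theorem laurent_identity_of_poincare_duality (d : ℕ) (hd : 1 ≤ d) (a : ℕ → ℚ)
    (ha0 : a 0 = 0) (had1 : a (d + 1) = 0)
    (hsym : ∑ j ∈ Finset.Icc 1 d, a j • ((T 2 - 1 : LaurentPolynomial ℚ)) ^ (d - j)
      = T (2 * ((d : ℤ) - 1)) *
        ∑ j ∈ Finset.Icc 1 d, a j • ((T (-2) - 1 : LaurentPolynomial ℚ)) ^ (d - j)) :
    ∑ j ∈ Finset.range (d + 1),
        (a j + a (j + 1)) • ((1 - T 2 : LaurentPolynomial ℚ)) ^ (d - j) * T (2 * (j : ℤ))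
      = ∑ j ∈ Finset.Icc 1 d, a j • ((T 2 - 1 : LaurentPolynomial ℚ)) ^ (d - j) := by
  rw [hsym]
  -- rewrite the RHS as a sum over `range d`
  have hR : T (2 * ((d : ℤ) - 1)) *
      ∑ j ∈ Finset.Icc 1 d, a j • ((T (-2) - 1 : LaurentPolynomial ℚ)) ^ (d - j)
      = ∑ i ∈ Finset.range d,
          a (i + 1) • ((1 - T 2 : LaurentPolynomial ℚ) ^ (d - 1 - i) * T (2 * (i : ℤ))) := by
    rw [Finset.mul_sum, ← Finset.Ico_add_one_right_eq_Icc, Finset.sum_Ico_eq_sum_range]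
    refine Finset.sum_congr rfl fun i hi => ?_
    rw [Finset.mem_range] at hi
    have h1 : d - (1 + i) = d - 1 - i := by omega
    rw [h1, hTT', mul_pow, T_pow, mul_smul_comm, add_comm 1 i]
    rw [← mul_assoc, mul_comm (T (2 * ((d:ℤ) - 1))), mul_assoc, ← T_add]
    congr 3
    have : ((d - 1 - i : ℕ) : ℤ) = (d : ℤ) - 1 - i := by omega
    rw [this]; ring
  rw [hR]
  -- split the LHS into two sums
  have hsplit : ∀ j ∈ Finset.range (d + 1),
      (a j + a (j + 1)) • ((1 - T 2 : LaurentPolynomial ℚ)) ^ (d - j) * T (2 * (j : ℤ))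
      = a j • ((1 - T 2 : LaurentPolynomial ℚ)) ^ (d - j) * T (2 * (j : ℤ))
        + a (j + 1) • ((1 - T 2 : LaurentPolynomial ℚ)) ^ (d - j) * T (2 * (j : ℤ)) := by
    intro j _; rw [add_smul, add_mul]
  rw [Finset.sum_congr rfl hsplit, Finset.sum_add_distrib, Finset.sum_range_succ',
    Finset.sum_range_succ]
  simp only [ha0, had1, zero_smul, zero_mul, add_zero, zero_add]
  rw [← Finset.sum_add_distrib]
  refine Finset.sum_congr rfl fun i hi => ?_
  rw [Finset.mem_range] at hi
  have h1 : d - (i + 1) = d - 1 - i := by omega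
  have h2 : d - i = (d - 1 - i) + 1 := by omega
  have h3 : (2 * (((i : ℕ) + 1 : ℕ) : ℤ)) = 2 * i + 2 := by push_cast; ring
  rw [h1, h2, pow_succ, h3, T_add, smul_mul_assoc, smul_mul_assoc, ← smul_add]
  congr 1
  ring
end

section
/- Let σ ⊆ ℝ^n be a strongly convex polyhedral cone, let μ_1 ⊊ μ_2 ⊊ ⋯ ⊊ μ_l be a chain of nonzero faces of σ, and for each i choose a point ρ_i in the relative interior of μ_i. Then the vectors ρ_1, …, ρ_l are linearly independent over ℝ. -/
/-- A polyhedral cone in `ℝ^n`: the set of nonnegative linear combinations of a finite subset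
of `ℝ^n`. -/
def IsPolyhedralCone {n : ℕ} (σ : Set (Fin n → ℝ)) : Prop :=
  ∃ (k : ℕ) (v : Fin k → (Fin n → ℝ)),
    σ = {x | ∃ c : Fin k → ℝ, (∀ i, 0 ≤ c i) ∧ x = ∑ i, c i • v i}

/-- A face of a cone `σ`: a subset of the form `{x ∈ σ | f x = 0}` for some linear functional
`f` that is nonnegative on `σ`. -/
def IsFaceOfCone {n : ℕ} (σ F : Set (Fin n → ℝ)) : Prop :=
  ∃ f : (Fin n → ℝ) →ₗ[ℝ] ℝ, (∀ x ∈ σ, 0 ≤ f x) ∧ F = {x ∈ σ | f x = 0}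

/-- Extension lemma: a segment from a point of `C` through a relative-interior point of `C`
extends slightly beyond inside `C`. -/
lemma exists_extend_beyond {n : ℕ} {C : Set (Fin n → ℝ)} {x y : Fin n → ℝ}
    (hx : x ∈ intrinsicInterior ℝ C) (hy : y ∈ C) :
    ∃ t : ℝ, 0 < t ∧ (1 + t) • x - t • y ∈ C := by
  obtain ⟨x', hx', hxx⟩ := hx
  have hxA : x ∈ affineSpan ℝ C := hxx ▸ x'.2
  have hyA : y ∈ affineSpan ℝ C := subset_affineSpan ℝ C hy
  have hmem : ∀ t : ℝ, (1 + t) • x - t • y ∈ affineSpan ℝ C := by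
    intro t
    have h : (1 + t) • x - t • y = AffineMap.lineMap y x (1 + t) := by
      simp only [AffineMap.lineMap_apply, vsub_eq_sub, vadd_eq_add, smul_sub]
      module
    rw [h]
    exact AffineMap.lineMap_mem _ hyA hxA
  set g : ℝ → affineSpan ℝ C := fun t => ⟨(1 + t) • x - t • y, hmem t⟩ with hg
  have hgc : Continuous g := by
    apply Continuous.subtype_mk
    fun_prop
  have hg0 : g 0 = x' := by
    apply Subtype.ext
    simp [hg, hxx]
  have hnhds : g ⁻¹' interior ((Subtype.val : affineSpan ℝ C → _) ⁻¹' C) ∈ nhds (0 : ℝ) := by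
    apply hgc.continuousAt.preimage_mem_nhds
    rw [hg0]
    exact isOpen_interior.mem_nhds hx'
  obtain ⟨ε, hε, hball⟩ := Metric.mem_nhds_iff.mp hnhds
  refine ⟨ε / 2, by positivity, ?_⟩
  have : g (ε / 2) ∈ interior ((Subtype.val : affineSpan ℝ C → _) ⁻¹' C) := by
    apply hball
    simp only [Metric.mem_ball, Real.dist_eq, sub_zero]
    rw [abs_of_pos (by positivity)]
    linarith
  exact interior_subset (s := ((Subtype.val : affineSpan ℝ C → _) ⁻¹' C)) this

/-- If a linear functional is nonnegative on `C` and vanishes at a relative-interior point,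
it vanishes on all of `C`. -/
lemma zero_on_of_relint {n : ℕ} {C : Set (Fin n → ℝ)} (f : (Fin n → ℝ) →ₗ[ℝ] ℝ)
    (hf : ∀ z ∈ C, 0 ≤ f z) {x : Fin n → ℝ} (hx : x ∈ intrinsicInterior ℝ C)
    (hfx : f x = 0) : ∀ y ∈ C, f y = 0 := by
  intro y hy
  obtain ⟨t, ht, hz⟩ := exists_extend_beyond hx hy
  have h1 : 0 ≤ f ((1 + t) • x - t • y) := hf _ hz
  have h2 : f ((1 + t) • x - t • y) = -(t * f y) := by
    simp [map_sub, map_smul, hfx]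
  nlinarith [hf y hy]

/-- Let `σ ⊆ ℝ^n` be a strongly convex polyhedral cone, `μ_1 ⊊ ⋯ ⊊ μ_l` a chain of nonzero
faces of `σ`, and `ρ_i` a point in the relative interior of `μ_i` for each `i`.  Then
`ρ_1, …, ρ_l` are linearly independent over `ℝ`. -/
theorem linearIndependent_relint_points_of_face_chain
    {n l : ℕ} (σ : Set (Fin n → ℝ)) (hσ : IsPolyhedralCone σ)
    (hstrict : σ ∩ (-σ) = {0})
    (μ : Fin l → Set (Fin n → ℝ))
    (hface : ∀ i, IsFaceOfCone σ (μ i))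
    (hnz : ∀ i, μ i ≠ {0})
    (hchain : StrictMono μ)
    (ρ : Fin l → (Fin n → ℝ))
    (hρ : ∀ i, ρ i ∈ intrinsicInterior ℝ (μ i)) :
    LinearIndependent ℝ ρ := by
  choose f hf hμ using hface
  have hμσ : ∀ i, μ i ⊆ σ := by
    intro i x hx
    rw [hμ i] at hx
    exact hx.1
  have hρμ : ∀ i, ρ i ∈ μ i := fun i => intrinsicInterior_subset (hρ i)
  -- cone property of σ
  have hcone : ∀ (t : ℝ), 0 ≤ t → ∀ x ∈ σ, t • x ∈ σ := by
    obtain ⟨k, v, rfl⟩ := hσ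
    rintro t ht x ⟨c, hc, rfl⟩
    exact ⟨fun i => t * c i, fun i => mul_nonneg ht (hc i),
      by rw [Finset.smul_sum]; simp [smul_smul]⟩
  -- relative interior points are nonzero
  have hρne : ∀ i, ρ i ≠ 0 := by
    intro i h0
    apply hnz i
    apply Set.eq_singleton_iff_unique_mem.mpr
    refine ⟨h0 ▸ hρμ i, ?_⟩
    intro y hy
    obtain ⟨t, ht, hz⟩ := exists_extend_beyond (h0 ▸ hρ i) hy
    have hz' : -(t • y) ∈ σ := by
      have := hμσ i hz
      simpa using this
    have hy' : t • y ∈ σ := hcone t ht.le _ (hμσ i hy)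
    have : -(t • y) ∈ σ ∩ (-σ) := ⟨hz', by simpa using hy'⟩
    rw [hstrict] at this
    have : t • y = 0 := by simpa using this
    have := smul_eq_zero.mp this
    rcases this with h | h
    · exact absurd h ht.ne'
    · exact h
  -- f i vanishes on ρ j for j ≤ i
  have hzero : ∀ i j : Fin l, j ≤ i → f i (ρ j) = 0 := by
    intro i j hji
    have : ρ j ∈ μ i := (hchain.monotone hji) (hρμ j)
    rw [hμ i] at this
    exact this.2
  -- f i is positive on ρ j for i < j
  have hpos : ∀ i j : Fin l, i < j → 0 < f i (ρ j) := by
    intro i j hij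
    rcases (hf i _ (hμσ j (hρμ j))).lt_or_eq with h | h
    · exact h
    · exfalso
      have hall : ∀ y ∈ μ j, f i y = 0 :=
        zero_on_of_relint (f i) (fun z hz => hf i z (hμσ j hz)) (hρ j) h.symm
      have hsub : μ j ⊆ μ i := by
        intro y hy
        rw [hμ i]
        exact ⟨hμσ j hy, hall y hy⟩
      exact (hchain hij).2 hsub
  rw [Fintype.linearIndependent_iff]
  intro c hc
  by_contra h
  push_neg at h
  obtain ⟨i₀, hi₀⟩ := h
  set S := Finset.univ.filter (fun i => c i ≠ 0) with hS
  have hSne : S.Nonempty := ⟨i₀, by simp [hS, hi₀]⟩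
  set m := S.max' hSne with hm
  have hcm : c m ≠ 0 := by
    have := S.max'_mem hSne
    simp [hS] at this
    exact this
  have hle : ∀ j, c j ≠ 0 → j ≤ m := by
    intro j hj
    exact S.le_max' j (by simp [hS, hj])
  by_cases hex : ∃ i : Fin l, i < m
  · obtain ⟨i₁, hi₁⟩ := hex
    have hmpos : 0 < (m : ℕ) := lt_of_le_of_lt (Nat.zero_le _) hi₁
    set i : Fin l := ⟨(m : ℕ) - 1, lt_of_le_of_lt (Nat.sub_le _ _) m.isLt⟩ with hi
    have him : i < m := by
      simp only [Fin.lt_def, hi]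
      omega
    have hkey := congrArg (f i) hc
    rw [map_sum, map_zero] at hkey
    have hterms : ∀ j ∈ Finset.univ, j ≠ m → f i (c j • ρ j) = 0 := by
      intro j _ hj
      rcases lt_or_ge j m with hlt | hge
      · have : j ≤ i := by
          simp only [Fin.le_def, hi]
          simp only [Fin.lt_def] at hlt
          omega
        rw [map_smul, hzero i j this, smul_eq_mul, mul_zero]
      · have : c j = 0 := by
          by_contra hcj
          exact absurd (lt_of_le_of_ne (hle j hcj) hj) hge.not_gt
        rw [this, zero_smul, map_zero]
    rw [Finset.sum_eq_single m hterms (by simp)] at hkey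
    rw [map_smul, smul_eq_mul] at hkey
    exact hcm (by
      have := hpos i m him
      exact (mul_eq_zero.mp hkey).resolve_right this.ne')
  · push_neg at hex
    have : ∀ j ∈ Finset.univ, j ≠ m → c j • ρ j = 0 := by
      intro j _ hj
      have : c j = 0 := by
        by_contra hcj
        exact hj (le_antisymm (hle j hcj) (hex j))
      rw [this, zero_smul]
    rw [Finset.sum_eq_single m this (by simp)] at hc
    exact hcm (by
      rcases smul_eq_zero.mp hc with h | h
      · exact h
      · exact absurd h (hρne m))
end
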